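/- arXiv:1504.03391 — 8 statements merged into one kernel-verified Lean document; each statement's English description precedes it below -/
import Mathlib

section
/- For any function f : {0,1}^n → ℝ and any integer k with 1 ≤ k ≤ n, the Fourier weight of f above level k satisfies Σ_{S ⊆ [n], |S| > k} f̂(S)² ≤ (1/(16k²)) · Σ_{i=1}^n Σ_{j=1}^n ‖∂_{ij} f‖₂². -/
/-! Write `f = Σ_S f̂(S) χ_S`. For `i ≠ j` one has `∂_{ij} χ_S = 4 χ_{S ∖ {i,j}}` when `i, j ∈ S`
and `0` otherwise, and `S ↦ S ∖ {i,j}` is injective on such `S`, so Parseval gives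
`‖∂_{ij} f‖₂² = 16 Σ_{S ∋ i,j} f̂(S)²`. Summing over ordered pairs,
`Σ_{i,j} ‖∂_{ij} f‖₂² = 16 Σ_S |S|(|S| - 1) f̂(S)²`,
and `|S|(|S| - 1) ≥ k²` as soon as `|S| > k`. -/

open Finset

noncomputable section

/-- The real value (0 or 1) of a Boolean coordinate. -/
def bval (b : Bool) : ℝ := if b then 1 else 0

/-- Expectation over the uniform distribution on `{0,1}^n`. -/
def EU {n : ℕ} (g : (Fin n → Bool) → ℝ) : ℝ :=
  (∑ x : Fin n → Bool, g x) / 2 ^ n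

/-- `ℓ₂` norm with respect to the uniform distribution. -/
def l2norm {n : ℕ} (g : (Fin n → Bool) → ℝ) : ℝ :=
  Real.sqrt (EU (fun x => g x ^ 2))

/-- `ℓ₁` norm with respect to the uniform distribution. -/
def l1norm {n : ℕ} (g : (Fin n → Bool) → ℝ) : ℝ :=
  EU (fun x => |g x|)

/-- Discrete partial derivative `∂_i f`. -/
def d1 {n : ℕ} (f : (Fin n → Bool) → ℝ) (i : Fin n) (x : Fin n → Bool) : ℝ :=
  f (Function.update x i true) - f (Function.update x i false)

/-- Second-order discrete derivative `∂_{ij} f`, with `∂_{ii} f ≡ 0`. -/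
def d2 {n : ℕ} (f : (Fin n → Bool) → ℝ) (i j : Fin n) (x : Fin n → Bool) : ℝ :=
  if i = j then 0 else
    f (Function.update (Function.update x i true) j true)
      - f (Function.update (Function.update x i true) j false)
      - f (Function.update (Function.update x i false) j true)
      + f (Function.update (Function.update x i false) j false)

/-- The parity (character) `χ_S(x) = (-1)^{Σ_{i∈S} x_i}`. -/
def chi {n : ℕ} (S : Finset (Fin n)) (x : Fin n → Bool) : ℝ :=
  ∏ i ∈ S, (if x i then (-1 : ℝ) else 1)

/-- The Fourier coefficient `f̂(S) = E_{x∼U}[f(x) χ_S(x)]`. -/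
def fcoeff {n : ℕ} (f : (Fin n → Bool) → ℝ) (S : Finset (Fin n)) : ℝ :=
  EU (fun x => f x * chi S x)

/-- Submodularity of a function on the Boolean cube. -/
def Submodular {n : ℕ} (f : (Fin n → Bool) → ℝ) : Prop :=
  ∀ x y, f (x ⊔ y) + f (x ⊓ y) ≤ f x + f y

/-- `f` is XOS: a maximum of finitely many nonnegative linear functions. -/
def IsXOS {n : ℕ} (f : (Fin n → Bool) → ℝ) : Prop :=
  ∃ (m : ℕ) (w : Fin (m + 1) → Fin n → ℝ),
    (∀ c i, 0 ≤ w c i) ∧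
    ∀ x, f x = Finset.univ.sup' Finset.univ_nonempty
      (fun c => ∑ i, w c i * bval (x i))

open Classical in
/-- Probability of an event under the uniform distribution on `{0,1}^n`. -/
def PrU {n : ℕ} (P : (Fin n → Bool) → Prop) : ℝ :=
  EU (fun x => if P x then 1 else 0)

/-- The threshold norm `‖h‖_T = sup{α ≥ 0 : Pr[|h(x)| ≥ α] ≥ α³}`. -/
def tnorm {n : ℕ} (h : (Fin n → Bool) → ℝ) : ℝ :=
  sSup {α : ℝ | 0 ≤ α ∧ α ^ 3 ≤ PrU (fun x => α ≤ |h x|)}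

end

open scoped symmDiff

lemma sq_le_card_offDiag {α : Type*} [DecidableEq α] {s : Finset α} {k : ℕ} (hk : k < #s) :
    k ^ 2 ≤ #s.offDiag := by
  rw [offDiag_card, ← Nat.mul_sub_one, sq]
  exact Nat.mul_le_mul hk.le (Nat.le_sub_one_of_lt hk)

section BooleanFourier

variable {n : ℕ}

def boolSign (b : Bool) : ℝ := if b then -1 else 1

lemma boolSign_mul_self (b : Bool) : boolSign b * boolSign b = 1 := by
  cases b <;> norm_num [boolSign]

lemma chi_eq_prod_univ (S : Finset (Fin n)) (x : Fin n → Bool) :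
    chi S x = ∏ i, if i ∈ S then boolSign (x i) else 1 := by
  rw [prod_ite_mem, univ_inter]; rfl

lemma chi_mul_chi (S T : Finset (Fin n)) (x : Fin n → Bool) :
    chi S x * chi T x = chi (S ∆ T) x := by
  simp only [chi_eq_prod_univ, ← prod_mul_distrib]
  refine prod_congr rfl fun i _ => ?_
  by_cases hS : i ∈ S <;> by_cases hT : i ∈ T <;>
    simp [hS, hT, mem_symmDiff, boolSign_mul_self]

lemma sum_chi (S : Finset (Fin n)) : ∑ x, chi S x = if S = ∅ then 2 ^ n else 0 := by
  simp only [chi_eq_prod_univ]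
  rw [← Fintype.prod_sum (fun i b => if i ∈ S then boolSign b else 1)]
  split_ifs with h
  · simp [h]
  · obtain ⟨i, hi⟩ := nonempty_iff_ne_empty.2 h
    exact prod_eq_zero (mem_univ i) (by norm_num [hi, boolSign])

lemma sum_chi_mul_chi (S T : Finset (Fin n)) :
    ∑ x, chi S x * chi T x = if S = T then 2 ^ n else 0 := by
  simp only [chi_mul_chi, sum_chi, symmDiff_eq_empty]

lemma sum_sets_chi_mul_chi (x y : Fin n → Bool) :
    ∑ S, chi S x * chi S y = if x = y then 2 ^ n else 0 := by
  have hprod S : chi S x * chi S y = ∏ i ∈ S, boolSign (x i) * boolSign (y i) :=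
    prod_mul_distrib.symm
  simp only [hprod]
  rw [← powerset_univ, ← prod_add_one]
  split_ifs with h
  · subst h; norm_num [boolSign_mul_self]
  · obtain ⟨i, hi⟩ := Function.ne_iff.1 h
    refine prod_eq_zero (mem_univ i) ?_
    cases hx : x i <;> cases hy : y i <;> simp_all [boolSign]

theorem fourier_inversion (f : (Fin n → Bool) → ℝ) (x : Fin n → Bool) :
    f x = ∑ S, fcoeff f S * chi S x := by
  have key : ∑ S, fcoeff f S * chi S x = (∑ y, f y * ∑ S, chi S y * chi S x) / 2 ^ n := by
    simp only [fcoeff, EU, div_mul_eq_mul_div, ← sum_div, sum_mul, mul_sum]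
    rw [sum_comm]
    simp only [mul_assoc]
  rw [key, sum_congr rfl fun y _ => by rw [sum_sets_chi_mul_chi]]
  simp

theorem EU_sq_sum_mul_chi {ι : Type*} (s : Finset ι) (m : ι → Finset (Fin n))
    (hm : Set.InjOn m s) (b : ι → ℝ) :
    EU (fun x => (∑ S ∈ s, b S * chi (m S) x) ^ 2) = ∑ S ∈ s, b S ^ 2 := by
  have hdiag : ∀ S ∈ s,
      ∑ T ∈ s, b S * b T * (if m S = m T then 2 ^ n else 0) = b S ^ 2 * 2 ^ n := by
    intro S hS
    rw [sum_eq_single_of_mem S hS fun T hT hTS => by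
      rw [if_neg fun h => hTS (hm hT hS h.symm), mul_zero]]
    rw [if_pos rfl]; ring
  have hexpand x : (∑ S ∈ s, b S * chi (m S) x) ^ 2
      = ∑ S ∈ s, ∑ T ∈ s, b S * b T * (chi (m S) x * chi (m T) x) := by
    rw [sq, sum_mul_sum]
    exact sum_congr rfl fun S _ => sum_congr rfl fun T _ => by ring
  calc EU (fun x => (∑ S ∈ s, b S * chi (m S) x) ^ 2)
      = (∑ S ∈ s, ∑ T ∈ s, b S * b T * ∑ x, chi (m S) x * chi (m T) x) / 2 ^ n := by
        simp only [EU, hexpand, mul_sum]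
        rw [sum_comm]
        exact congrArg (· / _) (sum_congr rfl fun S _ => sum_comm)
    _ = ∑ S ∈ s, b S ^ 2 := by
        simp only [sum_chi_mul_chi, sum_congr rfl hdiag, ← sum_mul]
        field_simp

lemma chi_update_of_notMem {S : Finset (Fin n)} {i : Fin n} (hi : i ∉ S) (x : Fin n → Bool)
    (b : Bool) : chi S (Function.update x i b) = chi S x :=
  prod_congr rfl fun l hl => by rw [Function.update_of_ne (ne_of_mem_of_not_mem hl hi)]

lemma chi_update_of_mem {S : Finset (Fin n)} {i : Fin n} (hi : i ∈ S) (x : Fin n → Bool)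
    (b : Bool) : chi S (Function.update x i b) = boolSign b * chi (S.erase i) x := by
  have hrest := chi_update_of_notMem (notMem_erase i S) x b
  unfold chi at hrest ⊢
  rw [← mul_prod_erase _ _ hi, Function.update_self, hrest]
  rfl

lemma d2_chi (S : Finset (Fin n)) {i j : Fin n} (hij : i ≠ j) (x : Fin n → Bool) :
    d2 (chi S) i j x = if i ∈ S ∧ j ∈ S then 4 * chi ((S.erase j).erase i) x else 0 := by
  rw [d2, if_neg hij]
  by_cases hj : j ∈ S
  · simp only [chi_update_of_mem hj, hj, and_true]
    by_cases hi : i ∈ S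
    · have hi' : i ∈ S.erase j := mem_erase.2 ⟨hij, hi⟩
      simp only [chi_update_of_mem hi', hi, if_true, boolSign]
      norm_num; ring
    · have hi' : i ∉ S.erase j := fun h => hi (mem_of_mem_erase h)
      simp only [chi_update_of_notMem hi', hi, if_false]
      ring
  · simp only [chi_update_of_notMem hj, hj, and_false, if_false]
    ring

lemma d2_eq_sum_fcoeff_mul_d2_chi (f : (Fin n → Bool) → ℝ) (i j : Fin n) (x : Fin n → Bool) :
    d2 f i j x = ∑ S, fcoeff f S * d2 (chi S) i j x := by
  unfold d2
  split_ifs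
  · simp
  · simp only [fourier_inversion f (Function.update _ _ _), ← sum_sub_distrib, ← sum_add_distrib]
    exact sum_congr rfl fun S _ => by ring

theorem l2norm_d2_sq (f : (Fin n → Bool) → ℝ) (i j : Fin n) :
    l2norm (d2 f i j) ^ 2 = 16 * ∑ S with (i, j) ∈ S.offDiag, fcoeff f S ^ 2 := by
  rw [l2norm, Real.sq_sqrt (by unfold EU; positivity)]
  by_cases hij : i = j
  · subst hij
    simp [d2, EU]
  have hd2 x : d2 f i j x
      = ∑ S with (i, j) ∈ S.offDiag, 4 * fcoeff f S * chi ((S.erase j).erase i) x := by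
    rw [d2_eq_sum_fcoeff_mul_d2_chi, sum_filter]
    refine sum_congr rfl fun S _ => ?_
    rw [d2_chi S hij]
    simp only [mem_offDiag, hij, ne_eq, not_false_eq_true, and_true]
    split_ifs <;> ring
  have hinj : Set.InjOn (fun S : Finset (Fin n) => (S.erase j).erase i)
      {S | (i, j) ∈ S.offDiag} := by
    intro S hS T hT (hST : (S.erase j).erase i = (T.erase j).erase i)
    obtain ⟨hiS, hjS, -⟩ := mem_offDiag.1 hS
    obtain ⟨hiT, hjT, -⟩ := mem_offDiag.1 hT
    rw [← insert_erase hjS, ← insert_erase (mem_erase.2 ⟨hij, hiS⟩), hST,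
      insert_erase (mem_erase.2 ⟨hij, hiT⟩), insert_erase hjT]
  simp only [hd2]
  rw [EU_sq_sum_mul_chi _ _ (by simpa using hinj), mul_sum]
  exact sum_congr rfl fun S _ => by ring

theorem sum_l2norm_d2_sq (f : (Fin n → Bool) → ℝ) :
    ∑ i, ∑ j, l2norm (d2 f i j) ^ 2 = 16 * ∑ S, (#S.offDiag : ℝ) * fcoeff f S ^ 2 := by
  simp only [l2norm_d2_sq, ← mul_sum, sum_filter]
  rw [← Fintype.sum_prod_type', sum_comm]
  simp only [← sum_filter, Prod.mk.eta, filter_mem_eq_inter, univ_inter, sum_const, nsmul_eq_mul]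

end BooleanFourier

theorem stmt0_general {n : ℕ} (f : (Fin n → Bool) → ℝ) (k : ℕ) (hk1 : 1 ≤ k) :
    ∑ S ∈ Finset.univ.filter (fun S : Finset (Fin n) => k < S.card), fcoeff f S ^ 2
      ≤ 1 / (16 * (k : ℝ) ^ 2) * ∑ i : Fin n, ∑ j : Fin n, l2norm (d2 f i j) ^ 2 := by
  have hk : (0 : ℝ) < k ^ 2 := pow_pos (Nat.cast_pos.2 hk1) 2
  rw [sum_l2norm_d2_sq]
  calc ∑ S with k < #S, fcoeff f S ^ 2
      ≤ ∑ S with k < #S, (#S.offDiag / k ^ 2 : ℝ) * fcoeff f S ^ 2 :=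
        sum_le_sum fun S hS => le_mul_of_one_le_left (sq_nonneg _) <| (one_le_div hk).2 <| by
          exact_mod_cast sq_le_card_offDiag (mem_filter.1 hS).2
    _ ≤ ∑ S, (#S.offDiag / k ^ 2 : ℝ) * fcoeff f S ^ 2 :=
        sum_le_sum_of_subset_of_nonneg (filter_subset _ _) fun _ _ _ => by positivity
    _ = 1 / (16 * k ^ 2) * (16 * ∑ S, (#S.offDiag : ℝ) * fcoeff f S ^ 2) := by
        rw [mul_sum, mul_sum]
        exact sum_congr rfl fun S _ => by field_simp

/-- For any f : {0,1}^n → ℝ and 1 ≤ k ≤ n,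
Σ_{|S|>k} f̂(S)² ≤ (1/(16k²)) · Σ_{i,j} ‖∂_{ij} f‖₂². -/
theorem stmt0 {n : ℕ} (f : (Fin n → Bool) → ℝ) (k : ℕ) (hk1 : 1 ≤ k) (hkn : k ≤ n) :
    ∑ S ∈ Finset.univ.filter (fun S : Finset (Fin n) => k < S.card), fcoeff f S ^ 2
      ≤ 1 / (16 * (k : ℝ) ^ 2) * ∑ i : Fin n, ∑ j : Fin n, l2norm (d2 f i j) ^ 2 :=
  stmt0_general f k hk1
end

section
/- For any XOS function f : {0,1}^n → ℝ₊ and any point x ∈ {0,1}^n, the sum of squares of second-order discrete derivatives over coordinates set to 1 satisfies Σ_{i,j : x_i = x_j = 1} (∂_{ij} f(x))² ≤ 5 · (f(x))². -/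
open Finset

/-!
Fix a clause `a` of `f` attaining the maximum at `x`, so that `∑_{i : x_i = 1} a_i = f(x)`.
For `i ≠ j` in the support of `x`, `∂_{ij} f(x) = ∂_i f(x) - ∂_i f(x_{j←0})` is a difference
of two nonnegative marginals, each at most `a_i + a_j` because the clause `a` still bounds `f`
from below at `x_{i←0,j←0}`. Moreover at any point `y` the marginals `∂_i f(y)` over the support
of `y` sum to at most `f(y)` (compare with a clause attaining the maximum at `y`), so every
column of `(|∂_{ij} f(x)|)` sums to at most `f(x) + f(x_{j←0}) ≤ 2 f(x)`, and by symmetry so does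
every row. Weighting `|∂_{ij} f(x)|² ≤ (a_i + a_j) |∂_{ij} f(x)|` by these sums gives the bound
`4 f(x)²`.
-/

open Finset Function

lemma sum_sq_le_of_abs_le_add {ι : Type*} (S : Finset ι) (M : ι → ι → ℝ) (a : ι → ℝ) (R : ℝ)
    (ha : ∀ i ∈ S, 0 ≤ a i) (hM : ∀ i ∈ S, ∀ j ∈ S, |M i j| ≤ a i + a j)
    (hrow : ∀ i ∈ S, ∑ j ∈ S, |M i j| ≤ R) (hcol : ∀ j ∈ S, ∑ i ∈ S, |M i j| ≤ R) :
    ∑ i ∈ S, ∑ j ∈ S, M i j ^ 2 ≤ 2 * R * ∑ i ∈ S, a i := by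
  calc ∑ i ∈ S, ∑ j ∈ S, M i j ^ 2
      ≤ ∑ i ∈ S, ∑ j ∈ S, (a i * |M i j| + a j * |M i j|) := by
        refine sum_le_sum fun i hi => sum_le_sum fun j hj => ?_
        rw [← sq_abs, sq, ← add_mul]
        exact mul_le_mul_of_nonneg_right (hM i hi j hj) (abs_nonneg _)
    _ = ∑ i ∈ S, a i * ∑ j ∈ S, |M i j| + ∑ j ∈ S, a j * ∑ i ∈ S, |M i j| := by
        simp only [sum_add_distrib, mul_sum]
        rw [sum_comm (f := fun i j => a j * |M i j|)]
    _ ≤ ∑ i ∈ S, a i * R + ∑ j ∈ S, a j * R := by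
        gcongr with i hi j hj
        · exact ha i hi
        · exact hrow i hi
        · exact ha j hj
        · exact hcol j hj
    _ = 2 * R * ∑ i ∈ S, a i := by rw [← sum_mul]; ring

section Cube

variable {n : ℕ}

lemma bval_le_one (b : Bool) : bval b ≤ 1 := by
  cases b <;> norm_num [bval]

lemma bval_mono : Monotone bval := by
  intro b c hbc
  cases b <;> cases c <;> simp_all [bval, Bool.le_iff_imp]

lemma d1_of_true (f : (Fin n → Bool) → ℝ) {y : Fin n → Bool} {i : Fin n} (hy : y i = true) :
    d1 f i y = f y - f (update y i false) := by
  rw [d1, update_eq_self_iff.2 hy.symm]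

lemma d2_comm (f : (Fin n → Bool) → ℝ) (i j : Fin n) (x : Fin n → Bool) :
    d2 f i j x = d2 f j i x := by
  rcases eq_or_ne i j with rfl | hij
  · rfl
  · simp only [d2, if_neg hij, if_neg hij.symm, update_comm hij]
    ring

lemma d2_eq_d1_sub_d1 (f : (Fin n → Bool) → ℝ) {i j : Fin n} (hij : i ≠ j) (x : Fin n → Bool) :
    d2 f i j x = d1 f i (update x j true) - d1 f i (update x j false) := by
  simp only [d2, d1, if_neg hij, update_comm hij]
  ring

def clause (a : Fin n → ℝ) (y : Fin n → Bool) : ℝ := ∑ i, a i * bval (y i)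

lemma clause_eq_sum_support (a : Fin n → ℝ) (y : Fin n → Bool) :
    clause a y = ∑ i ∈ univ.filter (fun i => y i = true), a i := by
  rw [clause, sum_filter]
  refine sum_congr rfl fun i _ => ?_
  cases y i <;> simp [bval]

lemma clause_sub_le_clause_update_false {a : Fin n → ℝ} (ha : ∀ i, 0 ≤ a i)
    (y : Fin n → Bool) (i : Fin n) : clause a y - a i ≤ clause a (update y i false) := by
  have hsplit : ∀ z : Fin n → Bool, clause a z = a i * bval (z i) + ∑ k ∈ univ.erase i,
      a k * bval (z k) := fun z => (add_sum_erase _ _ (mem_univ i)).symm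
  have hrest : ∑ k ∈ univ.erase i, a k * bval (update y i false k)
      = ∑ k ∈ univ.erase i, a k * bval (y k) :=
    sum_congr rfl fun k hk => by rw [update_of_ne (ne_of_mem_erase hk)]
  rw [hsplit, hsplit, hrest, update_self]
  nlinarith [ha i, bval_le_one (y i), show bval false = 0 from rfl]

structure IsSupportingClause (f : (Fin n → Bool) → ℝ) (a : Fin n → ℝ) (y : Fin n → Bool) :
    Prop where
  nonneg : ∀ i, 0 ≤ a i
  le : ∀ z, clause a z ≤ f z
  eq : clause a y = f y

lemma IsXOS.exists_isSupportingClause {f : (Fin n → Bool) → ℝ} (hf : IsXOS f)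
    (y : Fin n → Bool) : ∃ a, IsSupportingClause f a y := by
  obtain ⟨m, w, hw, hfw⟩ := hf
  obtain ⟨c, -, hc⟩ := exists_mem_eq_sup' univ_nonempty (fun c => ∑ i, w c i * bval (y i))
  refine ⟨w c, ⟨hw c, fun z => ?_, (hfw y ▸ hc).symm⟩⟩
  rw [hfw z]
  exact le_sup' (fun c => ∑ i, w c i * bval (z i)) (mem_univ c)

namespace IsSupportingClause

variable {f : (Fin n → Bool) → ℝ} {a : Fin n → ℝ} {y : Fin n → Bool}

lemma sub_le_update_false (h : IsSupportingClause f a y) (i : Fin n) :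
    f y - a i ≤ f (update y i false) :=
  h.eq ▸ (clause_sub_le_clause_update_false h.nonneg y i).trans (h.le _)

lemma sub_sub_le_update_update_false (h : IsSupportingClause f a y) (i j : Fin n) :
    f y - a j - a i ≤ f (update (update y j false) i false) := by
  have hj := clause_sub_le_clause_update_false h.nonneg y j
  have hi := clause_sub_le_clause_update_false h.nonneg (update y j false) i
  linarith [h.eq, h.le (update (update y j false) i false)]

lemma sum_support_eq (h : IsSupportingClause f a y) :
    ∑ i ∈ univ.filter (fun i => y i = true), a i = f y :=
  (clause_eq_sum_support a y).symm.trans h.eq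

end IsSupportingClause

namespace IsXOS

variable {f : (Fin n → Bool) → ℝ}

lemma monotone (hf : IsXOS f) : Monotone f := by
  intro y z hyz
  obtain ⟨a, ha⟩ := hf.exists_isSupportingClause y
  calc f y = clause a y := ha.eq.symm
    _ ≤ clause a z := sum_le_sum fun i _ =>
        mul_le_mul_of_nonneg_left (bval_mono (hyz i)) (ha.nonneg i)
    _ ≤ f z := ha.le z

lemma update_false_le (hf : IsXOS f) (y : Fin n → Bool) (i : Fin n) :
    f (update y i false) ≤ f y :=
  hf.monotone (update_le_iff.2 ⟨Bool.false_le _, fun _ _ => le_rfl⟩)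

lemma d1_nonneg (hf : IsXOS f) (i : Fin n) (y : Fin n → Bool) : 0 ≤ d1 f i y :=
  sub_nonneg.2 (hf.monotone (update_le_update_iff'.2 (Bool.false_le true)))

lemma sum_d1_le (hf : IsXOS f) {y : Fin n → Bool} {T : Finset (Fin n)}
    (hT : ∀ i ∈ T, y i = true) : ∑ i ∈ T, d1 f i y ≤ f y := by
  obtain ⟨a, ha⟩ := hf.exists_isSupportingClause y
  have hsub : T ⊆ univ.filter (fun i => y i = true) := fun i hi => by simpa using hT i hi
  calc ∑ i ∈ T, d1 f i y ≤ ∑ i ∈ T, a i := sum_le_sum fun i hi => by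
        rw [d1_of_true f (hT i hi)]
        linarith [ha.sub_le_update_false i]
    _ ≤ ∑ i ∈ univ.filter (fun i => y i = true), a i :=
        sum_le_sum_of_subset_of_nonneg hsub fun i _ _ => ha.nonneg i
    _ = f y := ha.sum_support_eq

variable {x : Fin n → Bool} {i j : Fin n}

lemma abs_d2_le_add (hf : IsXOS f) {a : Fin n → ℝ} (ha : IsSupportingClause f a x)
    (hi : x i = true) (hj : x j = true) : |d2 f i j x| ≤ a i + a j := by
  rcases eq_or_ne i j with rfl | hij
  · simp [d2, ha.nonneg i]
  have hx : update x j true = x := update_eq_self_iff.2 hj.symm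
  have hdrop : d1 f i x ≤ a i + a j := by
    linarith [d1_of_true f hi, ha.sub_le_update_false i, ha.nonneg j]
  have hdrop' : d1 f i (update x j false) ≤ a i + a j := by
    rw [d1_of_true f (by rwa [update_of_ne hij])]
    linarith [ha.sub_sub_le_update_update_false i j, hf.update_false_le x j]
  rw [d2_eq_d1_sub_d1 f hij, hx]
  exact abs_sub_le_of_nonneg_of_le (hf.d1_nonneg i x) hdrop (hf.d1_nonneg i _) hdrop'

lemma sum_abs_d2_le (hf : IsXOS f) (hj : x j = true) :
    ∑ i ∈ univ.filter (fun i => x i = true), |d2 f i j x| ≤ 2 * f x := by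
  set S := univ.filter (fun i => x i = true)
  have hx : update x j true = x := update_eq_self_iff.2 hj.symm
  have hS : ∀ i ∈ S.erase j, x i = true := fun i hi => by simpa [S] using mem_of_mem_erase hi
  have hS' : ∀ i ∈ S.erase j, update x j false i = true := fun i hi => by
    rw [update_of_ne (ne_of_mem_erase hi)]; exact hS i hi
  rw [← sum_erase S (f := fun i => |d2 f i j x|) (a := j) (by simp [d2])]
  calc ∑ i ∈ S.erase j, |d2 f i j x|
      ≤ ∑ i ∈ S.erase j, (d1 f i x + d1 f i (update x j false)) :=
        sum_le_sum fun i hi => by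
          rw [d2_eq_d1_sub_d1 f (ne_of_mem_erase hi), hx]
          refine (abs_sub _ _).trans_eq ?_
          rw [abs_of_nonneg (hf.d1_nonneg i _), abs_of_nonneg (hf.d1_nonneg i _)]
    _ ≤ f x + f (update x j false) := by
        rw [sum_add_distrib]
        exact add_le_add (hf.sum_d1_le hS) (hf.sum_d1_le hS')
    _ ≤ 2 * f x := by linarith [hf.update_false_le x j]

end IsXOS

end Cube

/-- For an XOS function f and any x,
Σ_{i,j : x_i=x_j=1} (∂_{ij} f(x))² ≤ 5 f(x)². -/
theorem stmt1 {n : ℕ} (f : (Fin n → Bool) → ℝ) (hf : IsXOS f) (x : Fin n → Bool) :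
    ∑ i ∈ Finset.univ.filter (fun i : Fin n => x i = true),
      ∑ j ∈ Finset.univ.filter (fun j : Fin n => x j = true), d2 f i j x ^ 2
      ≤ 5 * f x ^ 2 := by
  obtain ⟨a, ha⟩ := hf.exists_isSupportingClause x
  have hsupp : ∀ i ∈ univ.filter (fun i : Fin n => x i = true), x i = true := fun i hi =>
    (mem_filter.1 hi).2
  have hcol := fun j hj => hf.sum_abs_d2_le (x := x) (hsupp j hj)
  have hrow : ∀ i ∈ univ.filter (fun i : Fin n => x i = true),
      ∑ j ∈ univ.filter (fun j : Fin n => x j = true), |d2 f i j x| ≤ 2 * f x := by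
    simpa only [d2_comm f _ _ x] using hcol
  have h := sum_sq_le_of_abs_le_add _ (fun i j => d2 f i j x) a (2 * f x)
    (fun i _ => ha.nonneg i) (fun i hi j hj => hf.abs_d2_le_add ha (hsupp i hi) (hsupp j hj))
    hrow hcol
  rw [ha.sum_support_eq] at h
  nlinarith [sq_nonneg (f x)]
end

section
/- For any submodular function f : {0,1}^n → ℝ, any coordinate i ∈ [n] and any subset of coordinates A ⊆ [n], Σ_{j ∈ A} ‖∂_{ij} f‖₁ ≤ 2 · √|A| · ‖∂_i f‖₂. -/
open Finset

/-!
Submodularity makes every mixed derivative `∂_{ij} f` nonpositive, so `‖∂_{ij} f‖₁ = -E[∂_j ∂_i f]`,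
and averaging over the two values of `x_j` turns this into `2 E[∂_i f · χ_{j}]`, twice a degree-one
Fourier coefficient of `∂_i f`. Summing over `j ∈ A` gives `2 E[∂_i f · Σ_{j∈A} χ_{j}]`, and since the
characters `χ_{j}` are orthonormal, Cauchy–Schwarz bounds this by `2 ‖∂_i f‖₂ √|A|`.
-/

section

open Function

variable {n : ℕ}

lemma EU_sum {ι : Type*} (s : Finset ι) (g : ι → (Fin n → Bool) → ℝ) :
    EU (fun x => ∑ k ∈ s, g k x) = ∑ k ∈ s, EU (g k) := by
  rw [EU, Finset.sum_comm, Finset.sum_div]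
  rfl

lemma EU_mul_le_l2norm_mul_l2norm (g h : (Fin n → Bool) → ℝ) :
    EU (fun x => g x * h x) ≤ l2norm g * l2norm h := by
  have hc : (0 : ℝ) < 2 ^ n := by positivity
  calc EU (fun x => g x * h x)
      ≤ √(∑ x, g x ^ 2) * √(∑ x, h x ^ 2) / 2 ^ n :=
        div_le_div_of_nonneg_right (Real.sum_mul_le_sqrt_mul_sqrt _ g h) hc.le
    _ = l2norm g * l2norm h := by
        rw [l2norm, l2norm, EU, EU, Real.sqrt_div' _ hc.le, Real.sqrt_div' _ hc.le,
          div_mul_div_comm, Real.mul_self_sqrt hc.le]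

def flipAt (j : Fin n) (x : Fin n → Bool) : Fin n → Bool := update x j (!x j)

lemma flipAt_involutive (j : Fin n) : Involutive (flipAt j) := by
  intro x
  simp [flipAt]

lemma chi_singleton (j : Fin n) (x : Fin n → Bool) :
    chi {j} x = if x j then -1 else 1 :=
  Finset.prod_singleton _ _

lemma two_mul_fcoeff_singleton (g : (Fin n → Bool) → ℝ) (j : Fin n) :
    2 * fcoeff g {j} = EU (fun x => g (update x j false) - g (update x j true)) := by
  have pair : ∀ x, g x * chi {j} x + g (flipAt j x) * chi {j} (flipAt j x)
      = g (update x j false) - g (update x j true) := by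
    intro x
    have hx : update x j (x j) = x := update_eq_self j x
    cases hxj : x j <;> rw [hxj] at hx <;> simp [flipAt, chi_singleton, hxj, hx] <;> ring
  have flip_sum : ∑ x, g (flipAt j x) * chi {j} (flipAt j x) = ∑ x, g x * chi {j} x :=
    (flipAt_involutive j).bijective.sum_comp (fun x => g x * chi {j} x)
  rw [fcoeff, EU, EU, ← Finset.sum_congr rfl (fun x _ => pair x), Finset.sum_add_distrib,
    flip_sum]
  ring

lemma EU_chi_singleton_mul_chi_singleton (j k : Fin n) :
    EU (fun x => chi {j} x * chi {k} x) = if j = k then 1 else 0 := by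
  split_ifs with hjk
  · subst hjk
    have chi_sq : ∀ x : Fin n → Bool, chi {j} x * chi {j} x = 1 := by
      intro x
      rw [chi_singleton]
      split_ifs <;> norm_num
    simp [EU, chi_sq]
  · have h := two_mul_fcoeff_singleton (chi {k}) j
    simp only [chi_singleton, update_of_ne (Ne.symm hjk), sub_self] at h
    simpa [fcoeff, EU, chi_singleton, mul_comm] using h

lemma l2norm_sum_chi_singleton (A : Finset (Fin n)) :
    l2norm (fun x => ∑ j ∈ A, chi {j} x) = √A.card := by
  simp_rw [l2norm, sq, Finset.sum_mul_sum, EU_sum, EU_chi_singleton_mul_chi_singleton]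
  simp

lemma d2_eq_sub_d1 (f : (Fin n → Bool) → ℝ) (i j : Fin n) (x : Fin n → Bool) :
    d2 f i j x = d1 f i (update x j true) - d1 f i (update x j false) := by
  rcases eq_or_ne i j with rfl | hij
  · simp [d2, d1]
  · simp only [d2, if_neg hij, d1, update_comm (Ne.symm hij)]
    ring

lemma Submodular.d2_nonpos {f : (Fin n → Bool) → ℝ} (hf : Submodular f) (i j : Fin n)
    (x : Fin n → Bool) : d2 f i j x ≤ 0 := by
  rcases eq_or_ne i j with rfl | hij
  · simp [d2]
  set y := update (update x i true) j false
  set z := update (update x i false) j true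
  have hsup : y ⊔ z = update (update x i true) j true := by
    funext k
    simp only [y, z, Pi.sup_apply, update_apply]
    split_ifs <;> simp
  have hinf : y ⊓ z = update (update x i false) j false := by
    funext k
    simp only [y, z, Pi.inf_apply, update_apply]
    split_ifs <;> simp
  have submod := hf y z
  rw [hsup, hinf] at submod
  simp only [d2, if_neg hij]
  linarith

lemma Submodular.l1norm_d2 {f : (Fin n → Bool) → ℝ} (hf : Submodular f) (i j : Fin n) :
    l1norm (d2 f i j) = 2 * fcoeff (d1 f i) {j} := by
  rw [two_mul_fcoeff_singleton, l1norm]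
  congr 1
  funext x
  rw [abs_of_nonpos (hf.d2_nonpos i j x), d2_eq_sub_d1]
  ring

end

/-- For a submodular f, coordinate i and A ⊆ [n],
Σ_{j∈A} ‖∂_{ij} f‖₁ ≤ 2 √|A| ‖∂_i f‖₂. -/
theorem stmt4 {n : ℕ} (f : (Fin n → Bool) → ℝ) (hf : Submodular f)
    (i : Fin n) (A : Finset (Fin n)) :
    ∑ j ∈ A, l1norm (d2 f i j) ≤ 2 * Real.sqrt A.card * l2norm (d1 f i) := by
  calc ∑ j ∈ A, l1norm (d2 f i j)
      = 2 * EU (fun x => d1 f i x * ∑ j ∈ A, chi {j} x) := by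
        simp_rw [hf.l1norm_d2, fcoeff, ← Finset.mul_sum, ← EU_sum, Finset.mul_sum]
    _ ≤ 2 * (l2norm (d1 f i) * l2norm (fun x => ∑ j ∈ A, chi {j} x)) := by
        gcongr
        exact EU_mul_le_l2norm_mul_l2norm _ _
    _ = 2 * Real.sqrt A.card * l2norm (d1 f i) := by
        rw [l2norm_sum_chi_singleton]
        ring
end

section
/- Let f : {0,1}^n → [0,1] be a submodular function and let 0 < δ, ε < 1. Define J(ε,δ) = { i ∈ [n] : Pr_{x∼U}[ |∂_i f(x)| ≥ ε ] ≥ δ }. Then |J(ε,δ)| ≤ (8/ε) · log₂(2/δ). -/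
open Finset

/-!
Split `J(ε, δ)` according to the sign of `∂ᵢ f`; replacing `f` by `x ↦ f xᶜ` (still submodular)
turns negative derivatives into positive ones, so it suffices to bound the number of `i` with
`Pr[∂ᵢ f ≥ ε] ≥ τ := δ/2` by `(4/ε) log₂(1/τ)`.

By submodularity `∂ᵢ f` is antitone, so `Aᵢ = {∂ᵢ f ≥ ε}` is a down-set. Let `μ_q` be the product
measure with `Pr[xⱼ = 0] = q`. Since the coordinatewise `or` of independent `μ_q`, `μ_{q'}` samples
is `μ_{qq'}`-distributed, `μ_{qq'}(A) ≤ μ_q(A) μ_{q'}(A)` for down-sets, whence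
`τ ≤ μ_{1/2}(Aᵢ) ≤ μ_q(Aᵢ)^m` when `q^m ≥ 1/2`. Taking `m = ⌊log₂(1/τ)⌋` and `q = 1 - 1/(2m)` gives
`μ_q(Aᵢ) ≥ m / (2 log₂(1/τ))`. On the other hand, at any `x` the coordinates `i` with `xᵢ = 1` and
`∂ᵢ f(x) ≥ ε` can be switched off one by one, each lowering `f` by at least `ε`, so there are at
most `1/ε` of them; taking `μ_q`-expectations, `(1 - q) Σᵢ μ_q(Aᵢ) ≤ 1/ε`, and `1 - q = 1/(2m)`.
-/

open Function

namespace BiasedCube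

variable {ι : Type*} [Fintype ι] {q q' : ℝ}

/-- `q` is the probability of `false`. -/
def bitWeight (q : ℝ) (b : Bool) : ℝ := if b then 1 - q else q

def weight (q : ℝ) (x : ι → Bool) : ℝ := ∏ i, bitWeight q (x i)

lemma bitWeight_nonneg (hq0 : 0 ≤ q) (hq1 : q ≤ 1) (b : Bool) : 0 ≤ bitWeight q b := by
  cases b <;> simp [bitWeight] <;> linarith

lemma weight_nonneg (hq0 : 0 ≤ q) (hq1 : q ≤ 1) (x : ι → Bool) : 0 ≤ weight q x :=
  prod_nonneg fun _ _ => bitWeight_nonneg hq0 hq1 _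

variable [DecidableEq ι]

noncomputable def biasedProb (q : ℝ) (A : Set (ι → Bool)) : ℝ :=
  ∑ x, weight q x * A.indicator 1 x

lemma sum_weight (q : ℝ) : ∑ x : ι → Bool, weight q x = 1 := by
  simp only [weight]
  rw [← Fintype.prod_sum]
  simp [bitWeight]

lemma biasedProb_nonneg (hq0 : 0 ≤ q) (hq1 : q ≤ 1) (A : Set (ι → Bool)) :
    0 ≤ biasedProb q A :=
  sum_nonneg fun x _ =>
    mul_nonneg (weight_nonneg hq0 hq1 x) (Set.indicator_nonneg (fun _ _ => zero_le_one) x)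

lemma biasedProb_le_one (hq0 : 0 ≤ q) (hq1 : q ≤ 1) (A : Set (ι → Bool)) :
    biasedProb q A ≤ 1 := by
  rw [← sum_weight q (ι := ι)]
  refine sum_le_sum fun x _ => mul_le_of_le_one_right (weight_nonneg hq0 hq1 x) ?_
  exact Set.indicator_le_self' (fun _ _ => zero_le_one) x

lemma prod_sum_sum (F : ι → Bool → Bool → ℝ) :
    ∏ i, ∑ a, ∑ b, F i a b = ∑ x : ι → Bool, ∑ y : ι → Bool, ∏ i, F i (x i) (y i) := by
  rw [Fintype.prod_sum]
  exact sum_congr rfl fun x _ => Fintype.prod_sum _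

lemma weight_mul_eq_sum (q q' : ℝ) (z : ι → Bool) :
    weight (q * q') z = ∑ x, ∑ y, if x ⊔ y = z then weight q x * weight q' y else 0 := by
  have hbit : ∀ c, bitWeight (q * q') c
      = ∑ a, ∑ b, if (a || b) = c then bitWeight q a * bitWeight q' b else 0 := by
    intro c; cases c <;> simp [bitWeight]; ring
  simp_rw [weight, hbit, prod_sum_sum, prod_ite_zero, ← prod_mul_distrib, funext_iff]
  simp

lemma sum_weight_mul_weight_sup (q q' : ℝ) (G : (ι → Bool) → ℝ) :
    ∑ x, ∑ y, weight q x * weight q' y * G (x ⊔ y) = ∑ z, weight (q * q') z * G z := by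
  simp_rw [weight_mul_eq_sum, sum_mul, ite_mul, zero_mul]
  symm
  rw [sum_comm]
  refine sum_congr rfl fun x _ => ?_
  rw [sum_comm]
  simp

lemma biasedProb_mul_le {A : Set (ι → Bool)} (hA : IsLowerSet A)
    (hq0 : 0 ≤ q) (hq1 : q ≤ 1) (hq0' : 0 ≤ q') (hq1' : q' ≤ 1) :
    biasedProb (q * q') A ≤ biasedProb q A * biasedProb q' A := by
  rw [biasedProb, ← sum_weight_mul_weight_sup, biasedProb, biasedProb, sum_mul_sum]
  refine sum_le_sum fun x _ => sum_le_sum fun y _ => ?_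
  have hxy : A.indicator 1 (x ⊔ y) ≤ A.indicator (1 : (ι → Bool) → ℝ) x * A.indicator 1 y := by
    by_cases h : x ⊔ y ∈ A
    · simp [h, hA le_sup_left h, hA le_sup_right h]
    · simp only [Set.indicator_of_notMem h]
      exact mul_nonneg (Set.indicator_nonneg (fun _ _ => zero_le_one) x)
        (Set.indicator_nonneg (fun _ _ => zero_le_one) y)
  calc weight q x * weight q' y * A.indicator 1 (x ⊔ y)
      ≤ weight q x * weight q' y * (A.indicator 1 x * A.indicator 1 y) :=
        mul_le_mul_of_nonneg_left hxy
          (mul_nonneg (weight_nonneg hq0 hq1 x) (weight_nonneg hq0' hq1' y))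
    _ = weight q x * A.indicator 1 x * (weight q' y * A.indicator 1 y) := by ring

lemma biasedProb_pow_le {A : Set (ι → Bool)} (hA : IsLowerSet A) (hq0 : 0 ≤ q) (hq1 : q ≤ 1) :
    ∀ m : ℕ, biasedProb (q ^ m) A ≤ biasedProb q A ^ m
  | 0 => by simpa using biasedProb_le_one zero_le_one le_rfl A
  | m + 1 =>
    calc biasedProb (q ^ (m + 1)) A
        ≤ biasedProb (q ^ m) A * biasedProb q A := by
          rw [pow_succ]
          exact biasedProb_mul_le hA (pow_nonneg hq0 m) (pow_le_one₀ hq0 hq1) hq0 hq1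
      _ ≤ biasedProb q A ^ m * biasedProb q A := by
          gcongr
          · exact biasedProb_nonneg hq0 hq1 A
          · exact biasedProb_pow_le hA hq0 hq1 m
      _ = biasedProb q A ^ (m + 1) := (pow_succ _ _).symm

lemma biasedProb_mono {A : Set (ι → Bool)} (hA : IsLowerSet A)
    (hq0 : 0 ≤ q) (hqq' : q ≤ q') (hq'0 : 0 < q') (hq'1 : q' ≤ 1) :
    biasedProb q A ≤ biasedProb q' A := by
  have hr0 : 0 ≤ q / q' := div_nonneg hq0 hq'0.le
  have hr1 : q / q' ≤ 1 := div_le_one_of_le₀ hqq' hq'0.le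
  calc biasedProb q A = biasedProb (q' * (q / q')) A := by rw [mul_div_cancel₀ _ hq'0.ne']
    _ ≤ biasedProb q' A * biasedProb (q / q') A := biasedProb_mul_le hA hq'0.le hq'1 hr0 hr1
    _ ≤ biasedProb q' A :=
        mul_le_of_le_one_right (biasedProb_nonneg hq'0.le hq'1 A) (biasedProb_le_one hr0 hr1 A)

lemma sum_weight_mul_ite_of_update {i : ι} {g : (ι → Bool) → ℝ}
    (hg : ∀ x b, g (update x i b) = g x) :
    ∑ x, weight q x * (if x i then g x else 0) = (1 - q) * ∑ x, weight q x * g x := by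
  set P : (ι → Bool) → ℝ := fun x => ∏ j ∈ univ.erase i, bitWeight q (x j)
  have hW : ∀ x, weight q x = bitWeight q (x i) * P x := fun x =>
    (mul_prod_erase univ _ (mem_univ i)).symm
  have hP : ∀ x b, P (update x i b) = P x := fun x b =>
    prod_congr rfl fun j hj => by rw [update_of_ne (ne_of_mem_erase hj)]
  set K := ∑ x, if x i then P x * g x else 0
  have hflip : ∑ x, (if x i then 0 else P x * g x) = K := by
    have hσ : Involutive fun x : ι → Bool => update x i (!x i) := fun x => by simp
    refine Fintype.sum_bijective _ hσ.bijective _ _ fun x => ?_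
    cases x i <;> simp [hP, hg]
  have hsplit : ∀ x, weight q x * g x
      = (1 - q) * (if x i then P x * g x else 0) + q * (if x i then 0 else P x * g x) := by
    intro x; rw [hW]; cases x i <;> simp [bitWeight] <;> ring
  have hleft : ∀ x, weight q x * (if x i then g x else 0)
      = (1 - q) * (if x i then P x * g x else 0) := by
    intro x; rw [hW]; cases x i <;> simp [bitWeight]; ring
  simp_rw [hleft, hsplit, sum_add_distrib, ← mul_sum, hflip]
  ring

lemma biasedProb_half {n : ℕ} (A : Set (Fin n → Bool)) :
    biasedProb (1 / 2) A = PrU (· ∈ A) := by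
  have hW : ∀ x : Fin n → Bool, weight (1 / 2) x = (2 ^ n)⁻¹ := fun x => by
    simp only [weight, bitWeight]
    rw [prod_congr rfl fun i _ => (by split_ifs <;> norm_num : _ = (2 : ℝ)⁻¹)]
    simp
  rw [biasedProb, PrU, EU, sum_div]
  refine sum_congr rfl fun x _ => ?_
  classical
  rw [hW, Set.indicator_apply]
  split_ifs <;> simp

lemma PrU_le_biasedProb_pow {n m : ℕ} {q : ℝ} {A : Set (Fin n → Bool)} (hA : IsLowerSet A)
    (hq0 : 0 ≤ q) (hq1 : q ≤ 1) (hqm : 1 / 2 ≤ q ^ m) :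
    PrU (· ∈ A) ≤ biasedProb q A ^ m :=
  calc PrU (· ∈ A) = biasedProb (1 / 2) A := (biasedProb_half A).symm
    _ ≤ biasedProb (q ^ m) A :=
        biasedProb_mono hA (by norm_num) hqm (by linarith) (pow_le_one₀ hq0 hq1)
    _ ≤ biasedProb q A ^ m := biasedProb_pow_le hA hq0 hq1 m

end BiasedCube

open BiasedCube

lemma d1_update_self {n : ℕ} (f : (Fin n → Bool) → ℝ) (i : Fin n) (x : Fin n → Bool) (b : Bool) :
    d1 f i (update x i b) = d1 f i x := by
  simp [d1]

lemma d1_comp_compl {n : ℕ} (f : (Fin n → Bool) → ℝ) (i : Fin n) (x : Fin n → Bool) :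
    d1 (fun x => f xᶜ) i x = -d1 f i xᶜ := by
  have h : ∀ b, (update x i b)ᶜ = update xᶜ i (!b) := fun b => by
    ext j
    rcases eq_or_ne j i with rfl | hj <;> simp [*]
  simp only [d1, h, Bool.not_true, Bool.not_false]
  ring

lemma PrU_comp_compl {n : ℕ} (P : (Fin n → Bool) → Prop) : PrU (fun x => P xᶜ) = PrU P := by
  simp only [PrU, EU]
  congr 1
  exact Fintype.sum_bijective _ compl_involutive.bijective _ _ fun x => rfl

lemma PrU_or_le {n : ℕ} (P Q : (Fin n → Bool) → Prop) :
    PrU (fun x => P x ∨ Q x) ≤ PrU P + PrU Q := by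
  simp only [PrU, EU, ← add_div, ← sum_add_distrib]
  gcongr with x
  split_ifs <;> simp_all

lemma PrU_le_abs_d1_le {n : ℕ} (f : (Fin n → Bool) → ℝ) (i : Fin n) (ε : ℝ) :
    PrU (fun x => ε ≤ |d1 f i x|)
      ≤ PrU (fun x => ε ≤ d1 f i x) + PrU (fun x => ε ≤ d1 (fun x => f xᶜ) i x) := by
  have hcompl : PrU (fun x => ε ≤ d1 (fun x => f xᶜ) i x) = PrU (fun x => d1 f i x ≤ -ε) := by
    rw [← PrU_comp_compl]
    simp_rw [d1_comp_compl, compl_compl, le_neg]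
  rw [hcompl, add_comm]
  simp_rw [le_abs']
  exact PrU_or_le _ _

lemma two_rpow_le_pow_floor {L : ℝ} (hL : 1 ≤ L) : (2 : ℝ) ^ L ≤ (2 * L / ⌊L⌋₊) ^ ⌊L⌋₊ := by
  set m := ⌊L⌋₊
  have hm1 : (1 : ℝ) ≤ m := by exact_mod_cast Nat.floor_pos.2 hL
  have hmL : (m : ℝ) ≤ L := Nat.floor_le (by linarith)
  have hLm : L < m + 1 := Nat.lt_floor_add_one L
  set u := L / m
  have hu1 : 1 ≤ u := (one_le_div (by linarith)).2 hmL
  have hu2 : u ≤ 2 := (div_le_iff₀ (by linarith)).2 (by linarith)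
  have hbern : (2 : ℝ) ^ u ≤ 2 * u := by
    have h := rpow_one_add_le_one_add_mul_self (s := 1) (p := u - 1) (by norm_num)
      (by linarith) (by linarith)
    rw [one_add_one_eq_two, Real.rpow_sub_one two_ne_zero] at h
    linarith
  calc (2 : ℝ) ^ L = ((2 : ℝ) ^ u) ^ m := by
        rw [← Real.rpow_natCast, ← Real.rpow_mul zero_le_two, div_mul_cancel₀ _ (by positivity)]
    _ ≤ (2 * u) ^ m := by gcongr
    _ = (2 * L / m) ^ m := by rw [mul_div_assoc]

lemma one_half_le_one_sub_pow (m : ℕ) : (1 / 2 : ℝ) ≤ (1 - 1 / (2 * m)) ^ m := by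
  rcases Nat.eq_zero_or_pos m with rfl | hm
  · norm_num
  have hm1 : (1 : ℝ) ≤ m := by exact_mod_cast hm
  have ha : 1 / (2 * (m : ℝ)) ≤ 1 := by rw [div_le_one (by positivity)]; linarith
  have h := one_add_mul_le_pow (a := -(1 / (2 * m : ℝ))) (by linarith) m
  have hhalf : (m : ℝ) * (1 / (2 * m)) = 1 / 2 := by field_simp
  rw [mul_neg, hhalf, ← sub_eq_add_neg, ← sub_eq_add_neg] at h
  linarith

namespace Submodular

variable {n : ℕ} {f : (Fin n → Bool) → ℝ}

theorem d1_antitone (hf : Submodular f) (i : Fin n) : Antitone (d1 f i) := by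
  intro x y hxy
  have hsup : update x i true ⊔ update y i false = update y i true := by
    ext j
    rcases eq_or_ne j i with rfl | hj
    · simp
    · simp [hj, sup_eq_right.2 (hxy j)]
  have hinf : update x i true ⊓ update y i false = update x i false := by
    ext j
    rcases eq_or_ne j i with rfl | hj
    · simp
    · simp [hj, inf_eq_left.2 (hxy j)]
  have h := hf (update x i true) (update y i false)
  rw [hsup, hinf] at h
  simp only [d1]
  linarith

lemma isLowerSet_setOf_le_d1 (hf : Submodular f) (i : Fin n) (ε : ℝ) :
    IsLowerSet {x | ε ≤ d1 f i x} :=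
  fun _ _ hyx hx => hx.trans (hf.d1_antitone i hyx)

lemma exists_add_mul_card_le (hf : Submodular f) (ε : ℝ) (S : Finset (Fin n)) :
    ∀ x, (∀ i ∈ S, x i = true ∧ ε ≤ d1 f i x) → ∃ y, f y + ε * #S ≤ f x := by
  induction S using Finset.induction_on with
  | empty => exact fun x _ => ⟨x, by simp⟩
  | insert i S hi ih =>
    intro x hx
    obtain ⟨hxi, hεi⟩ := hx i (mem_insert_self i S)
    have hle : update x i false ≤ x := update_le_iff.2 ⟨Bool.false_le _, fun _ _ => le_rfl⟩
    obtain ⟨y, hy⟩ := ih (update x i false) fun j hj => by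
      obtain ⟨hxj, hεj⟩ := hx j (mem_insert_of_mem hj)
      exact ⟨by rwa [update_of_ne (ne_of_mem_of_not_mem hj hi)],
        hεj.trans (hf.d1_antitone j hle)⟩
    have hstep : f (update x i false) + ε ≤ f x := by
      rw [d1, ← hxi, update_eq_self] at hεi
      linarith
    refine ⟨y, ?_⟩
    rw [card_insert_of_notMem hi]
    push_cast
    linarith

lemma mul_card_le_one (hf : Submodular f) (hrange : ∀ x, f x ∈ Set.Icc (0 : ℝ) 1)
    (ε : ℝ) (x : Fin n → Bool) : ε * #{i | x i = true ∧ ε ≤ d1 f i x} ≤ 1 := by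
  obtain ⟨y, hy⟩ := hf.exists_add_mul_card_le ε _ x fun i hi => (mem_filter.1 hi).2
  linarith [(hrange y).1, (hrange x).2]

theorem one_sub_mul_sum_biasedProb_le (hf : Submodular f)
    (hrange : ∀ x, f x ∈ Set.Icc (0 : ℝ) 1) {ε q : ℝ} (hε : 0 < ε) (hq0 : 0 ≤ q) (hq1 : q ≤ 1) :
    (1 - q) * ∑ i, biasedProb q {x | ε ≤ d1 f i x} ≤ 1 / ε := by
  have hterm : ∀ i, (1 - q) * biasedProb q {x | ε ≤ d1 f i x}
      = ∑ x, weight q x * (if x i then {x | ε ≤ d1 f i x}.indicator 1 x else 0) :=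
    fun i => (sum_weight_mul_ite_of_update fun x b => by
      simp only [Set.indicator_apply, Set.mem_ofPred_eq, d1_update_self, Pi.one_apply]).symm
  have hcount : ∀ x : Fin n → Bool,
      ∑ i, (if x i then {x | ε ≤ d1 f i x}.indicator (1 : (Fin n → Bool) → ℝ) x else 0)
        = #{i | x i = true ∧ ε ≤ d1 f i x} := by
    intro x
    rw [natCast_card_filter]
    refine sum_congr rfl fun i _ => ?_
    by_cases hxi : x i <;> by_cases hεi : ε ≤ d1 f i x <;> simp [hxi, hεi]
  calc (1 - q) * ∑ i, biasedProb q {x | ε ≤ d1 f i x}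
      = ∑ x, weight q x * #{i | x i = true ∧ ε ≤ d1 f i x} := by
        rw [mul_sum, sum_congr rfl fun i _ => hterm i, sum_comm]
        simp_rw [← mul_sum, hcount]
    _ ≤ ∑ x, weight q x * (1 / ε) := by
        gcongr with x
        · exact weight_nonneg hq0 hq1 x
        · rw [le_div_iff₀ hε, mul_comm]
          exact hf.mul_card_le_one hrange ε x
    _ = 1 / ε := by rw [← sum_mul, sum_weight, one_mul]

theorem comp_compl (hf : Submodular f) : Submodular fun x => f xᶜ := by
  intro x y
  simp only [compl_sup, compl_inf]
  linarith [hf xᶜ yᶜ]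

theorem card_le_div_mul_logb (hf : Submodular f) (hrange : ∀ x, f x ∈ Set.Icc (0 : ℝ) 1)
    {ε τ : ℝ} (hε : 0 < ε) (hτ0 : 0 < τ) (hτ : τ ≤ 1 / 2) :
    (#{i | τ ≤ PrU (fun x => ε ≤ d1 f i x)} : ℝ) ≤ 4 / ε * Real.logb 2 τ⁻¹ := by
  set L := Real.logb 2 τ⁻¹
  have h2L : (2 : ℝ) ^ L = τ⁻¹ := Real.rpow_logb zero_lt_two (by norm_num) (inv_pos.2 hτ0)
  have hL : 1 ≤ L := by
    rw [Real.le_logb_iff_rpow_le one_lt_two (inv_pos.2 hτ0), Real.rpow_one]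
    rw [le_inv_comm₀ two_pos hτ0]
    linarith
  set m := ⌊L⌋₊
  have hm : 0 < m := Nat.floor_pos.2 hL
  set q : ℝ := 1 - 1 / (2 * m)
  have hq0 : 0 ≤ q := by
    have : (1 : ℝ) ≤ m := by exact_mod_cast hm
    rw [sub_nonneg, div_le_one (by positivity)]
    linarith
  have hq1 : q ≤ 1 := sub_le_self _ (by positivity)
  set T : Finset (Fin n) := {i | τ ≤ PrU (fun x => ε ≤ d1 f i x)}
  have hlow : ∀ i ∈ T, m / (2 * L) ≤ biasedProb q {x | ε ≤ d1 f i x} := by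
    intro i hi
    refine le_of_pow_le_pow_left₀ hm.ne' (biasedProb_nonneg hq0 hq1 _) ?_
    calc (m / (2 * L)) ^ m = ((2 * L / m) ^ m)⁻¹ := by rw [← inv_pow, inv_div]
      _ ≤ ((2 : ℝ) ^ L)⁻¹ := inv_anti₀ (by positivity) (two_rpow_le_pow_floor hL)
      _ = τ := by rw [h2L, inv_inv]
      _ ≤ PrU (fun x => ε ≤ d1 f i x) := (mem_filter.1 hi).2
      _ ≤ biasedProb q {x | ε ≤ d1 f i x} ^ m :=
          PrU_le_biasedProb_pow (hf.isLowerSet_setOf_le_d1 i ε) hq0 hq1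
            (one_half_le_one_sub_pow m)
  calc (#T : ℝ) = 4 * L * ((1 - q) * ∑ i ∈ T, m / (2 * L)) := by
        rw [sum_const, nsmul_eq_mul, sub_sub_cancel]
        field_simp
        ring
    _ ≤ 4 * L * ((1 - q) * ∑ i, biasedProb q {x | ε ≤ d1 f i x}) := by
        gcongr
        exact (sum_le_sum hlow).trans
          (sum_le_univ_sum_of_nonneg fun i => biasedProb_nonneg hq0 hq1 _)
    _ ≤ 4 * L * (1 / ε) := by gcongr; exact hf.one_sub_mul_sum_biasedProb_le hrange hε hq0 hq1
    _ = 4 / ε * L := by ring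

end Submodular

open Classical in
theorem stmt7_general {n : ℕ} (f : (Fin n → Bool) → ℝ) (hf : Submodular f)
    (hrange : ∀ x, f x ∈ Set.Icc (0 : ℝ) 1) (ε δ : ℝ)
    (hε0 : 0 < ε) (hδ0 : 0 < δ) (hδ1 : δ < 1) :
    ((Finset.univ.filter (fun i : Fin n =>
        δ ≤ PrU (fun x => ε ≤ |d1 f i x|))).card : ℝ)
      ≤ 8 / ε * Real.logb 2 (2 / δ) := by
  set g : (Fin n → Bool) → ℝ := fun x => f xᶜ
  have hsplit : ∀ i, δ ≤ PrU (fun x => ε ≤ |d1 f i x|) →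
      δ / 2 ≤ PrU (fun x => ε ≤ d1 f i x) ∨ δ / 2 ≤ PrU (fun x => ε ≤ d1 g i x) := by
    intro i hi
    by_contra! h
    linarith [PrU_le_abs_d1_le f i ε]
  let T : ((Fin n → Bool) → ℝ) → Finset (Fin n) := fun h =>
    {i | δ / 2 ≤ PrU (fun x => ε ≤ d1 h i x)}
  have hτ0 : 0 < δ / 2 := by positivity
  have hτ : δ / 2 ≤ 1 / 2 := by linarith
  calc ((Finset.univ.filter (fun i : Fin n => δ ≤ PrU (fun x => ε ≤ |d1 f i x|))).card : ℝ)
      ≤ #(T f ∪ T g) := by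
        exact_mod_cast card_le_card fun i hi => by simpa [T] using hsplit i (mem_filter.1 hi).2
    _ ≤ #(T f) + #(T g) := by exact_mod_cast card_union_le _ _
    _ ≤ 4 / ε * Real.logb 2 (δ / 2)⁻¹ + 4 / ε * Real.logb 2 (δ / 2)⁻¹ :=
        add_le_add (hf.card_le_div_mul_logb hrange hε0 hτ0 hτ)
          (hf.comp_compl.card_le_div_mul_logb (fun x => hrange xᶜ) hε0 hτ0 hτ)
    _ = 8 / ε * Real.logb 2 (2 / δ) := by rw [inv_div]; ring

open Classical in
/-- For submodular f : {0,1}^n → [0,1] and 0 < ε, δ < 1, the set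
J(ε,δ) = {i : Pr[|∂_i f(x)| ≥ ε] ≥ δ} has size at most (8/ε)·log₂(2/δ). -/
theorem stmt7 {n : ℕ} (f : (Fin n → Bool) → ℝ) (hf : Submodular f)
    (hrange : ∀ x, f x ∈ Set.Icc (0 : ℝ) 1) (ε δ : ℝ)
    (hε0 : 0 < ε) (hε1 : ε < 1) (hδ0 : 0 < δ) (hδ1 : δ < 1) :
    ((Finset.univ.filter (fun i : Fin n =>
        δ ≤ PrU (fun x => ε ≤ |d1 f i x|))).card : ℝ)
      ≤ 8 / ε * Real.logb 2 (2 / δ) :=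
  stmt7_general f hf hrange ε δ hε0 hδ0 hδ1
end

section
/- For any function h : {0,1}^n → [−1,1], the ℓ₂ norm is bounded by the threshold norm as ‖h‖₂ ≤ √2 · ‖h‖_T. -/
open Finset

/-
For every `α` above `t = ‖h‖_T` we have `Pr[|h| ≥ α] < α³`, and since `|h| ≤ 1` pointwise
`h² ≤ α² + 1[|h| ≥ α]`; hence `E[h²] ≤ α² + α³`. Letting `α ↓ t` gives `E[h²] ≤ t² + t³ ≤ 2t²`,
where `t ≤ 1` because `α³ ≤ Pr[…] ≤ 1` for every `α` in the threshold set.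
-/

section Expectation

variable {n : ℕ}

lemma EU_mono {f g : (Fin n → Bool) → ℝ} (hfg : ∀ x, f x ≤ g x) : EU f ≤ EU g := by
  unfold EU
  gcongr with x
  exact hfg x

lemma EU_const (c : ℝ) : EU (fun _ : Fin n → Bool => c) = c := by
  simp [EU, Finset.card_univ, mul_comm]

lemma EU_add (f g : (Fin n → Bool) → ℝ) : EU (fun x => f x + g x) = EU f + EU g := by
  simp [EU, Finset.sum_add_distrib, add_div]

open Classical in
lemma PrU_nonneg (P : (Fin n → Bool) → Prop) : 0 ≤ PrU P :=
  calc 0 = EU (fun _ : Fin n → Bool => 0) := (EU_const 0).symm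
    _ ≤ PrU P := EU_mono fun x => by split_ifs <;> norm_num

open Classical in
lemma PrU_le_one (P : (Fin n → Bool) → Prop) : PrU P ≤ 1 :=
  calc PrU P ≤ EU (fun _ : Fin n → Bool => 1) := EU_mono fun x => by split_ifs <;> norm_num
    _ = 1 := EU_const 1

end Expectation

section ThresholdNorm

variable {n : ℕ} (h : (Fin n → Bool) → ℝ)

lemma le_one_of_pow_three_le_PrU {α : ℝ} {P : (Fin n → Bool) → Prop} (hα : α ^ 3 ≤ PrU P) :
    α ≤ 1 := by
  by_contra! hlt
  linarith [one_lt_pow₀ hlt (by norm_num : 3 ≠ 0), PrU_le_one P]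

lemma zero_mem_threshold_set : (0 : ℝ) ∈ {α : ℝ | 0 ≤ α ∧ α ^ 3 ≤ PrU (fun x => α ≤ |h x|)} :=
  ⟨le_rfl, by simpa using PrU_nonneg _⟩

lemma threshold_set_bddAbove :
    BddAbove {α : ℝ | 0 ≤ α ∧ α ^ 3 ≤ PrU (fun x => α ≤ |h x|)} :=
  ⟨1, fun _ hα => le_one_of_pow_three_le_PrU hα.2⟩

lemma tnorm_nonneg : 0 ≤ tnorm h :=
  le_csSup (threshold_set_bddAbove h) (zero_mem_threshold_set h)

lemma tnorm_le_one : tnorm h ≤ 1 :=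
  csSup_le ⟨0, zero_mem_threshold_set h⟩ fun _ hα => le_one_of_pow_three_le_PrU hα.2

lemma PrU_lt_of_tnorm_lt {α : ℝ} (hα : tnorm h < α) : PrU (fun x => α ≤ |h x|) < α ^ 3 := by
  by_contra! hle
  exact hα.not_ge <| le_csSup (threshold_set_bddAbove h) ⟨(tnorm_nonneg h).trans hα.le, hle⟩

end ThresholdNorm

lemma sq_le_sq_add_ite_le_abs {a : ℝ} (ha : |a| ≤ 1) (α : ℝ) :
    a ^ 2 ≤ α ^ 2 + if α ≤ |a| then 1 else 0 := by
  rw [← sq_abs a]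
  split_ifs with hα
  · nlinarith [abs_nonneg a]
  · nlinarith [abs_nonneg a, not_le.mp hα]

lemma EU_sq_le_of_tnorm_lt {n : ℕ} {h : (Fin n → Bool) → ℝ} (hb : ∀ x, |h x| ≤ 1) {α : ℝ}
    (hα : tnorm h < α) : EU (fun x => h x ^ 2) ≤ α ^ 2 + α ^ 3 := by
  classical
  calc EU (fun x => h x ^ 2)
      ≤ EU (fun x => α ^ 2 + if α ≤ |h x| then 1 else 0) :=
        EU_mono fun x => sq_le_sq_add_ite_le_abs (hb x) α
    _ = α ^ 2 + PrU (fun x => α ≤ |h x|) := by rw [EU_add, EU_const]; rfl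
    _ ≤ α ^ 2 + α ^ 3 := by linarith [PrU_lt_of_tnorm_lt h hα]

lemma EU_sq_le_tnorm {n : ℕ} {h : (Fin n → Bool) → ℝ} (hb : ∀ x, |h x| ≤ 1) :
    EU (fun x => h x ^ 2) ≤ tnorm h ^ 2 + tnorm h ^ 3 := by
  have hcont : Continuous fun α : ℝ => α ^ 2 + α ^ 3 := by fun_prop
  exact ge_of_tendsto (hcont.tendsto _ |>.mono_left nhdsWithin_le_nhds)
    (eventually_nhdsWithin_of_forall (s := Set.Ioi (tnorm h)) fun _ hα =>
      EU_sq_le_of_tnorm_lt hb hα)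

/-- For any h : {0,1}^n → [−1,1], ‖h‖₂ ≤ √2 ‖h‖_T. -/
theorem stmt9 {n : ℕ} (h : (Fin n → Bool) → ℝ)
    (hr : ∀ x, h x ∈ Set.Icc (-1 : ℝ) 1) :
    l2norm h ≤ Real.sqrt 2 * tnorm h := by
  have hb : ∀ x, |h x| ≤ 1 := fun x => abs_le.2 (hr x)
  have ht0 := tnorm_nonneg h
  have hE : EU (fun x => h x ^ 2) ≤ 2 * tnorm h ^ 2 := by
    nlinarith [EU_sq_le_tnorm hb, tnorm_le_one h, pow_two_nonneg (tnorm h)]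
  calc l2norm h ≤ Real.sqrt (2 * tnorm h ^ 2) := Real.sqrt_le_sqrt hE
    _ = Real.sqrt 2 * tnorm h := by rw [Real.sqrt_mul zero_le_two, Real.sqrt_sq ht0]
end

section
/- Let t ≥ 1 be an integer and let f : {0,1}^{2t} → [0,1] be any function such that f(x) = min{1, w(x)/t} whenever the Hamming weight w(x) = Σ_{i=1}^{2t} x_i is not equal to t, and f(x) ∈ {1 − 1/(2t), 1} whenever w(x) = t. Then f is monotone and submodular. -/
open Finset

/-- Hamming weight of a point of the cube. -/
def wt {n : ℕ} (x : Fin n → Bool) : ℕ := ∑ i, (x i).toNat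

/-!
Write `f x = (2 min(t, w(x)) - ε(x)) / 2t` with an integer defect `ε(x) ∈ {0, 1}` that can be
nonzero only on the middle layer `w(x) = t`. Along a strict chain the weight rises by at least one,
which raises `2 min(t, w)` by `2` below the middle layer and so absorbs the defect; for incomparable
`x, y` the weights satisfy `w(x ⊓ y) < w(x), w(y) < w(x ⊔ y)` with equal sums, and concavity of
`min(t, ·)` leaves a slack of `2` exactly when `x` or `y` sits on the middle layer. Both facts are
then linear arithmetic over `ℤ`.
-/

section Cube

variable {n : ℕ}

lemma wt_lt_wt {x y : Fin n → Bool} (h : x < y) : wt x < wt y := by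
  obtain ⟨i, hi⟩ := Pi.lt_def.1 h |>.2
  refine Finset.sum_lt_sum (fun j _ => Bool.toNat_le_toNat (h.le j)) ⟨i, Finset.mem_univ i, ?_⟩
  revert hi
  cases x i <;> cases y i <;> decide

lemma wt_sup_add_wt_inf (x y : Fin n → Bool) : wt (x ⊔ y) + wt (x ⊓ y) = wt x + wt y := by
  simp only [wt, ← Finset.sum_add_distrib]
  refine Finset.sum_congr rfl fun i _ => ?_
  change (x i || y i).toNat + (x i && y i).toNat = _
  cases x i <;> cases y i <;> rfl

lemma submodular_of_incomparable {f : (Fin n → Bool) → ℝ}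
    (h : ∀ x y, ¬x ≤ y → ¬y ≤ x → f (x ⊔ y) + f (x ⊓ y) ≤ f x + f y) :
    Submodular f := by
  intro x y
  by_cases hxy : x ≤ y
  · rw [sup_eq_right.2 hxy, inf_eq_left.2 hxy, add_comm]
  by_cases hyx : y ≤ x
  · rw [sup_eq_left.2 hyx, inf_eq_right.2 hyx]
  exact h x y hxy hyx

end Cube

section MiddleLayerDefect

variable {n t : ℕ} {f : (Fin n → Bool) → ℝ} {ε : (Fin n → Bool) → ℤ}

lemma exists_middleLayer_defect (ht : 1 ≤ t)
    (h1 : ∀ x, wt x ≠ t → f x = min 1 ((wt x : ℝ) / t))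
    (h2 : ∀ x, wt x = t → f x = 1 - 1 / (2 * t) ∨ f x = 1) (x : Fin n → Bool) :
    ∃ e : ℤ, (e = 0 ∨ e = 1 ∧ wt x = t) ∧
      f x = ((2 * min (t : ℤ) (wt x) - e : ℤ) : ℝ) / (2 * t) := by
  have ht0 : (0 : ℝ) < t := by exact_mod_cast ht
  by_cases hx : wt x = t
  · refine (h2 x hx).elim (fun hfx => ⟨1, Or.inr ⟨rfl, hx⟩, ?_⟩)
      (fun hfx => ⟨0, Or.inl rfl, ?_⟩) <;>
    · rw [hfx, hx, min_self]
      field_simp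
      push_cast
      ring
  · refine ⟨0, Or.inl rfl, ?_⟩
    rw [h1 x hx, sub_zero, ← div_self ht0.ne', min_div_div_right ht0.le]
    push_cast
    rw [mul_div_mul_left _ _ two_ne_zero]

lemma monotone_of_middleLayer_defect (hε : ∀ x, ε x = 0 ∨ ε x = 1 ∧ wt x = t)
    (hf : ∀ x, f x = ((2 * min (t : ℤ) (wt x) - ε x : ℤ) : ℝ) / (2 * t)) :
    Monotone f := by
  refine monotone_iff_forall_lt.2 fun x y hxy => ?_
  have hw := wt_lt_wt hxy
  rw [hf x, hf y]
  refine div_le_div_of_nonneg_right (Int.cast_le.2 ?_) (by positivity)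
  have := hε x
  have := hε y
  omega

lemma submodular_of_middleLayer_defect (hε : ∀ x, ε x = 0 ∨ ε x = 1 ∧ wt x = t)
    (hf : ∀ x, f x = ((2 * min (t : ℤ) (wt x) - ε x : ℤ) : ℝ) / (2 * t)) :
    Submodular f := by
  refine submodular_of_incomparable fun x y hxy hyx => ?_
  have hsum := wt_sup_add_wt_inf x y
  have hx := wt_lt_wt (left_lt_sup.2 hyx)
  have hy := wt_lt_wt (right_lt_sup.2 hxy)
  have hx' := wt_lt_wt (inf_lt_left.2 hxy)
  have hy' := wt_lt_wt (inf_lt_right.2 hyx)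
  rw [hf, hf, hf x, hf y, ← add_div, ← add_div, ← Int.cast_add, ← Int.cast_add]
  refine div_le_div_of_nonneg_right (Int.cast_le.2 ?_) (by positivity)
  have := hε x
  have := hε y
  have := hε (x ⊔ y)
  have := hε (x ⊓ y)
  omega

end MiddleLayerDefect

/-- Let t ≥ 1 and f : {0,1}^{2t} → [0,1] with f(x) = min{1, w(x)/t}
whenever w(x) ≠ t and f(x) ∈ {1 − 1/(2t), 1} whenever w(x) = t. Then f is
monotone and submodular. -/
theorem stmt15 (t : ℕ) (ht : 1 ≤ t) (f : (Fin (2 * t) → Bool) → ℝ)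
    (h1 : ∀ x, wt x ≠ t → f x = min 1 ((wt x : ℝ) / t))
    (h2 : ∀ x, wt x = t → f x = 1 - 1 / (2 * t) ∨ f x = 1) :
    (∀ x y, x ≤ y → f x ≤ f y) ∧ Submodular f := by
  choose ε hε hf using exists_middleLayer_defect ht h1 h2
  exact ⟨fun _ _ hxy => monotone_of_middleLayer_defect hε hf hxy,
    submodular_of_middleLayer_defect hε hf⟩
end

section
/- Let m be a positive integer and let C ⊆ {0,1}^m be a set of points such that any two distinct points of C are at Hamming distance at least 3. Let g : C → {0,1} be arbitrary and define f : {0,1}^m → [0,1] by f(y) = g(y) if y ∈ C and f(y) = 1 otherwise. Then f is self-bounding: for every y ∈ {0,1}^m, Σ_{i=1}^m max{ f(y) − f(y ⊕ e_i), 0 } ≤ f(y), where y ⊕ e_i denotes y with its i-th bit flipped. -/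
open Finset

/-!
The neighbours of a codeword lie off `C`, where `f = 1 ≥ f y`, so every term vanishes. A point
`y ∉ C` has `f y = 1` and, the code having minimum distance `3`, at most one neighbour in `C`;
so at most one term is nonzero, and it is at most `1`.
-/

theorem update_not_self_ne {ι : Type*} [DecidableEq ι] (y : ι → Bool) (i : ι) :
    Function.update y i (!y i) ≠ y :=
  fun h => by simpa using congrFun h i

theorem hammingDist_update_le_one {ι β : Type*} [Fintype ι] [DecidableEq ι] [DecidableEq β]
    (x : ι → β) (i : ι) (b : β) : hammingDist (Function.update x i b) x ≤ 1 := by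
  refine (card_le_card fun j hj => ?_).trans (card_singleton i).le
  rw [mem_filter] at hj
  by_contra hji
  exact hj.2 (Function.update_of_ne (mem_singleton.not.1 hji) ..)

section SeparatedCode

variable {ι : Type*} [Fintype ι] [DecidableEq ι]

def IsSelfBounding (f : (ι → Bool) → ℝ) : Prop :=
  ∀ y, ∑ i, max (f y - f (Function.update y i (!y i))) 0 ≤ f y

variable {C : Finset (ι → Bool)}

theorem update_not_self_notMem (hC : ∀ y ∈ C, ∀ z ∈ C, y ≠ z → 3 ≤ hammingDist y z)
    {y : ι → Bool} (hy : y ∈ C) (i : ι) :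
    Function.update y i (!y i) ∉ C := fun h => by
  have h3 := hC _ h _ hy (update_not_self_ne y i)
  have h1 := hammingDist_update_le_one y i (!y i)
  omega

-- Two distinct neighbours of `y` would be at distance at most `2` via `y`.
theorem card_update_not_self_mem_le_one (hC : ∀ y ∈ C, ∀ z ∈ C, y ≠ z → 3 ≤ hammingDist y z)
    (y : ι → Bool) :
    #{i | Function.update y i (!y i) ∈ C} ≤ 1 := by
  refine card_le_one.2 fun i hi j hj => ?_
  by_contra hij
  rw [mem_filter] at hi hj
  have hne : Function.update y i (!y i) ≠ Function.update y j (!y j) := fun h => by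
    simpa [Function.update_of_ne hij] using congrFun h i
  have h3 := hC _ hi.2 _ hj.2 hne
  have htri := hammingDist_triangle (Function.update y i (!y i)) y (Function.update y j (!y j))
  rw [hammingDist_comm y] at htri
  have hi1 := hammingDist_update_le_one y i (!y i)
  have hj1 := hammingDist_update_le_one y j (!y j)
  omega

theorem isSelfBounding_of_eq_one_of_notMem (hC : ∀ y ∈ C, ∀ z ∈ C, y ≠ z → 3 ≤ hammingDist y z)
    {f : (ι → Bool) → ℝ} (hf0 : ∀ y, 0 ≤ f y)
    (hf1 : ∀ y, f y ≤ 1) (hfC : ∀ y ∉ C, f y = 1) : IsSelfBounding f := by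
  intro y
  by_cases hy : y ∈ C
  · have hterm : ∀ i, max (f y - f (Function.update y i (!y i))) 0 = 0 := fun i => by
      rw [hfC _ (update_not_self_notMem hC hy i)]
      exact max_eq_right (by linarith [hf1 y])
    simp only [hterm, sum_const_zero]
    exact hf0 y
  · calc ∑ i, max (f y - f (Function.update y i (!y i))) 0
        ≤ ∑ i, if Function.update y i (!y i) ∈ C then (1 : ℝ) else 0 := by
          gcongr with i
          split_ifs with h
          · exact max_le (by linarith [hf0 (Function.update y i (!y i)), hf1 y]) zero_le_one
          · simp [hfC _ h, hfC _ hy]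
      _ = #{i | Function.update y i (!y i) ∈ C} := by rw [sum_boole]
      _ ≤ 1 := by exact_mod_cast card_update_not_self_mem_le_one hC y
      _ = f y := (hfC y hy).symm

end SeparatedCode

theorem stmt17_general (m : ℕ) (C : Finset (Fin m → Bool))
    (hC : ∀ y ∈ C, ∀ z ∈ C, y ≠ z → 3 ≤ hammingDist y z)
    (g : (Fin m → Bool) → Bool)
    (f : (Fin m → Bool) → ℝ)
    (hf : ∀ y, f y = if y ∈ C then (if g y then (1 : ℝ) else 0) else 1) :
    ∀ y : Fin m → Bool,
      ∑ i : Fin m, max (f y - f (Function.update y i (!(y i)))) 0 ≤ f y := by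
  refine isSelfBounding_of_eq_one_of_notMem hC (fun y => ?_) (fun y => ?_) fun y hy => by
    simp [hf, hy]
  all_goals rw [hf]; split_ifs <;> norm_num

/-- Let C ⊆ {0,1}^m have pairwise Hamming distance at least 3,
g : C → {0,1} arbitrary, and f = g on C, f = 1 off C. Then f is self-bounding:
Σ_i max{f(y) − f(y ⊕ e_i), 0} ≤ f(y) for all y. -/
theorem stmt17 (m : ℕ) (hm : 0 < m) (C : Finset (Fin m → Bool))
    (hC : ∀ y ∈ C, ∀ z ∈ C, y ≠ z → 3 ≤ hammingDist y z)
    (g : (Fin m → Bool) → Bool)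
    (f : (Fin m → Bool) → ℝ)
    (hf : ∀ y, f y = if y ∈ C then (if g y then (1 : ℝ) else 0) else 1) :
    ∀ y : Fin m → Bool,
      ∑ i : Fin m, max (f y - f (Function.update y i (!(y i)))) 0 ≤ f y :=
  stmt17_general m C hC g f hf
end

section
/- Let f : 2^{[n]} → ℝ be an XOS function. Then there exists a finite set V ⊆ ℝⁿ such that for every A ⊆ [n], f(A) = E_{σ}[ max_{v∈V} Σ_{i∈A} σ_i v_i ], where σ is uniform over {−1,1}^A. That is, every XOS function is the (unnormalized) Rademacher complexity function of some finite set of vectors. -/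
/-!
Take `V = {(s_i w_{c,i})_i : c ∈ C, s ∈ {±1}ⁿ}`, every clause of the XOS representation with
every sign pattern. For a fixed `σ`, each `v = s ⊙ w_c ∈ V` has correlation
`Σ_{i∈A} σ_i s_i w_{c,i} ≤ Σ_{i∈A} w_{c,i} ≤ f(A)` because the weights are nonnegative, and
`s = σ` on `A` attains it. So the maximum equals `f(A)` for every `σ`, hence so does its mean.
-/

open Finset

/-- The real sign ±1 of a Boolean. -/
def sgn (b : Bool) : ℝ := if b then 1 else -1

lemma sgn_mul_self (b : Bool) : sgn b * sgn b = 1 := by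
  cases b <;> norm_num [sgn]

lemma sgn_mul_sgn_le_one (a b : Bool) : sgn a * sgn b ≤ 1 := by
  cases a <;> cases b <;> norm_num [sgn]

section SignFlips

variable {ι α : Type*} [Fintype ι] [Fintype α] [DecidableEq α]

open Classical in
noncomputable def signFlips (w : ι → α → ℝ) : Finset (α → ℝ) :=
  image (fun p : ι × (α → Bool) => fun i => sgn (p.2 i) * w p.1 i) univ

lemma signFlips_nonempty [Nonempty ι] (w : ι → α → ℝ) : (signFlips w).Nonempty :=
  univ_nonempty.image _

lemma mem_signFlips {w : ι → α → ℝ} {v : α → ℝ} :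
    v ∈ signFlips w ↔ ∃ (c : ι) (s : α → Bool), (fun i => sgn (s i) * w c i) = v := by
  simp [signFlips]

lemma signedSum_signFlips_le {w : ι → α → ℝ} (hw : ∀ c i, 0 ≤ w c i) {A : Finset α}
    (σ : A → Bool) {v : α → ℝ} (hv : v ∈ signFlips w) :
    ∃ c, ∑ i ∈ A.attach, sgn (σ i) * v i ≤ ∑ i ∈ A, w c i := by
  obtain ⟨c, s, rfl⟩ := mem_signFlips.1 hv
  refine ⟨c, ?_⟩
  rw [← sum_attach A (fun i => w c i)]
  refine sum_le_sum fun i _ => ?_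
  calc sgn (σ i) * (sgn (s i) * w c i) = (sgn (σ i) * sgn (s i)) * w c i := by ring
    _ ≤ 1 * w c i := mul_le_mul_of_nonneg_right (sgn_mul_sgn_le_one _ _) (hw c i)
    _ = w c i := one_mul _

lemma exists_signFlips_signedSum_eq (w : ι → α → ℝ) {A : Finset α} (σ : A → Bool) (c : ι) :
    ∃ v ∈ signFlips w, ∑ i ∈ A.attach, sgn (σ i) * v i = ∑ i ∈ A, w c i := by
  let s : α → Bool := fun i => if h : i ∈ A then σ ⟨i, h⟩ else true
  refine ⟨fun i => sgn (s i) * w c i, mem_signFlips.2 ⟨c, s, rfl⟩, ?_⟩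
  rw [← sum_attach A (fun i => w c i)]
  refine sum_congr rfl fun i _ => ?_
  simp only [s, i.2, dite_true, Subtype.coe_eta, ← mul_assoc, sgn_mul_self, one_mul]

lemma sup'_signedSum_signFlips [Nonempty ι] {w : ι → α → ℝ} (hw : ∀ c i, 0 ≤ w c i)
    (A : Finset α) (σ : A → Bool) :
    (signFlips w).sup' (signFlips_nonempty w) (fun v => ∑ i ∈ A.attach, sgn (σ i) * v i) =
      univ.sup' univ_nonempty (fun c => ∑ i ∈ A, w c i) := by
  apply le_antisymm
  · refine sup'_le _ _ fun v hv => ?_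
    obtain ⟨c, hc⟩ := signedSum_signFlips_le hw σ hv
    exact hc.trans (le_sup' (fun c => ∑ i ∈ A, w c i) (mem_univ c))
  · refine sup'_le _ _ fun c _ => ?_
    obtain ⟨v, hv, hvc⟩ := exists_signFlips_signedSum_eq w σ c
    exact hvc ▸ le_sup' (fun v => ∑ i ∈ A.attach, sgn (σ i) * v i) hv

end SignFlips

lemma sum_const_div_two_pow_card {α : Type*} [DecidableEq α] (A : Finset α) (x : ℝ) :
    (∑ _σ : A → Bool, x) / 2 ^ A.card = x := by
  simp

/-- Every XOS set function on 2^{[n]} is the (unnormalized)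
Rademacher complexity function of some finite set of vectors V ⊆ ℝⁿ. -/
theorem stmt19 {n : ℕ} (f : Finset (Fin n) → ℝ)
    (hf : ∃ (m : ℕ) (w : Fin (m + 1) → Fin n → ℝ), (∀ c i, 0 ≤ w c i) ∧
      ∀ A : Finset (Fin n),
        f A = Finset.univ.sup' Finset.univ_nonempty (fun c => ∑ i ∈ A, w c i)) :
    ∃ (V : Finset (Fin n → ℝ)) (hV : V.Nonempty),
      ∀ A : Finset (Fin n),
        f A = (∑ σ : {i // i ∈ A} → Bool,
          V.sup' hV (fun v => ∑ i ∈ A.attach, sgn (σ i) * v i.1)) / 2 ^ A.card := by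
  obtain ⟨m, w, hw, hfw⟩ := hf
  refine ⟨signFlips w, signFlips_nonempty w, fun A => ?_⟩
  simp only [sup'_signedSum_signFlips hw, ← hfw, sum_const_div_two_pow_card]
end
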